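/- arXiv:math/0610036 — 2 statements merged into one kernel-verified Lean document; each statement's English description precedes it below -/
import Mathlib

section
/- For every ε > 0 there exists n₀ such that for every n ≥ n₀, m(n, n−1) > log₂ n + (1/2)·log₂ log₂ n + (1/2)·log₂(π/2) − ε. -/
/-! Take a hypergraph on `n` vertices with `m = m(n, n - 1)` lines. No line contains every
vertex, so for distinct `u`, `v` some `w` lies off the line `uv`, and then the line `uw` contains
`u` but not `v`. Hence the sets of lines through the vertices form an antichain of `n` subsets of
an `m`-set, and Sperner's theorem gives `n ≤ C(m, ⌊m/2⌋)`. Because the Stirling sequence decreases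
to `√π`, the bound `C(2k, k) ≤ 4^k / √(πk)` holds for every `k`, so `n ≤ 2^m √(2 / (πm))`;
taking logarithms and using `log₂ log₂ n ≤ log₂ m` gives the claim for every `n ≥ 3`. -/

open Finset

/-- The line determined by two vertices `u`, `v` in a hypergraph with edge set `H`:
`{u, v} ∪ {p : ∃ T ∈ H, {u, v, p} ⊆ T}`. -/
def hline {V : Type*} [Fintype V] [DecidableEq V] (H : Finset (Finset V)) (u v : V) :
    Finset V :=
  {u, v} ∪ Finset.univ.filter (fun p => ∃ T ∈ H, ({u, v, p} : Finset V) ⊆ T)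

/-- The set of all lines of a hypergraph. -/
def hlines {V : Type*} [Fintype V] [DecidableEq V] (H : Finset (Finset V)) :
    Finset (Finset V) :=
  ((Finset.univ ×ˢ Finset.univ).filter (fun p : V × V => p.1 ≠ p.2)).image
    (fun p => hline H p.1 p.2)

/-- `mValue n k` is the smallest number of distinct lines in a hypergraph on `n`
vertices in which every line consists of at most `k` vertices. -/
noncomputable def mValue (n k : ℕ) : ℕ :=
  sInf { m | ∃ H : Finset (Finset (Fin n)),
    (∀ u v : Fin n, u ≠ v → (hline H u v).card ≤ k) ∧ (hlines H).card = m }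

open Real Stirling

lemma card_le_choose_of_separating {V : Type*} [Fintype V] (𝓛 : Finset (Finset V))
    (hsep : ∀ u v, u ≠ v → ∃ L ∈ 𝓛, u ∈ L ∧ v ∉ L) :
    Fintype.card V ≤ (#𝓛).choose (#𝓛 / 2) := by
  classical
  let star : V → Finset 𝓛 := fun v => univ.filter fun L => v ∈ (L : Finset V)
  have hstar : ∀ u v, u ≠ v → ¬ star u ⊆ star v := fun u v huv hsub => by
    obtain ⟨L, hL, hu, hv⟩ := hsep u v huv
    exact hv (mem_filter.1 (hsub (mem_filter.2 ⟨mem_univ ⟨L, hL⟩, hu⟩))).2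
  have hinj : Function.Injective star := fun u v h =>
    not_not.1 fun huv => hstar u v huv h.subset
  have hanti : IsAntichain (· ⊆ ·) (SetLike.coe (univ.image star)) := by
    simp only [coe_image, coe_univ, Set.image_univ]
    rintro _ ⟨u, rfl⟩ _ ⟨v, rfl⟩ hne
    exact hstar u v fun h => hne (congrArg star h)
  simpa [card_image_of_injective _ hinj] using hanti.sperner

section Hypergraph

variable {V : Type*} [Fintype V] [DecidableEq V] (H : Finset (Finset V))

lemma mem_hline {u v p : V} :
    p ∈ hline H u v ↔ p = u ∨ p = v ∨ ∃ T ∈ H, ({u, v, p} : Finset V) ⊆ T := by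
  simp [hline]

lemma hline_mem_hlines {u v : V} (h : u ≠ v) : hline H u v ∈ hlines H :=
  mem_image.2 ⟨(u, v), by simp [h], rfl⟩

lemma notMem_hline_of_notMem_hline {u v w : V} (huv : u ≠ v) (hw : w ∉ hline H u v) :
    v ∉ hline H u w := by
  rw [mem_hline] at hw ⊢
  rintro (h | rfl | ⟨T, hT, hsub⟩)
  · exact huv h.symm
  · exact hw (Or.inr (Or.inl rfl))
  · refine hw (Or.inr (Or.inr ⟨T, hT, subset_trans ?_ hsub⟩))
    intro x
    simp only [mem_insert, mem_singleton]
    tauto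

lemma exists_mem_hlines_mem_notMem (hproper : ∀ u v, u ≠ v → (hline H u v).card < Fintype.card V)
    {u v : V} (huv : u ≠ v) : ∃ L ∈ hlines H, u ∈ L ∧ v ∉ L := by
  obtain ⟨w, hw⟩ : ∃ w, w ∉ hline H u v := by
    by_contra! h
    exact (hproper u v huv).ne (card_eq_iff_eq_univ _ |>.2 (eq_univ_iff_forall.2 h))
  have huw : u ≠ w := by rintro rfl; exact hw ((mem_hline H).2 (Or.inl rfl))
  exact ⟨hline H u w, hline_mem_hlines H huw, (mem_hline H).2 (Or.inl rfl),
    notMem_hline_of_notMem_hline H huv hw⟩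

end Hypergraph

lemma exists_card_hlines_eq_mValue {n k : ℕ} (hk : 2 ≤ k) :
    ∃ H : Finset (Finset (Fin n)),
      (∀ u v : Fin n, u ≠ v → (hline H u v).card ≤ k) ∧ (hlines H).card = mValue n k := by
  have hempty : ∀ u v : Fin n, u ≠ v → (hline ∅ u v).card ≤ k := fun u v _ => by
    simpa [hline] using card_le_two.trans hk
  exact Nat.sInf_mem (s := {m | ∃ H : Finset (Finset (Fin n)),
    (∀ u v : Fin n, u ≠ v → (hline H u v).card ≤ k) ∧ (hlines H).card = m}) ⟨_, ∅, hempty, rfl⟩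

lemma le_choose_mValue {n : ℕ} (hn : 3 ≤ n) :
    n ≤ (mValue n (n - 1)).choose (mValue n (n - 1) / 2) := by
  obtain ⟨H, hH, hcard⟩ := exists_card_hlines_eq_mValue (n := n) (k := n - 1) (by omega)
  have hproper : ∀ u v : Fin n, u ≠ v → (hline H u v).card < Fintype.card (Fin n) :=
    fun u v huv => by have := hH u v huv; rw [Fintype.card_fin]; omega
  simpa [hcard] using card_le_choose_of_separating (hlines H)
    fun u v huv => exists_mem_hlines_mem_notMem H hproper huv

lemma stirlingSeq_two_mul_div_sq (k : ℕ) :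
    stirlingSeq (2 * k) / stirlingSeq k ^ 2 = k.centralBinom * √k / 4 ^ k := by
  have hfact : ((2 * k).factorial : ℝ) = k.centralBinom * (k.factorial * k.factorial) := by
    rw [Nat.centralBinom_eq_two_mul_choose]
    exact_mod_cast (Nat.choose_mul_factorial_mul_factorial (by omega : k ≤ 2 * k)).symm.trans
      (by rw [show 2 * k - k = k by omega]; ring)
  have hsqrt : √(2 * ((2 * k : ℕ) : ℝ)) = 2 * √k := by
    rw [show 2 * ((2 * k : ℕ) : ℝ) = 2 ^ 2 * k by push_cast; ring, sqrt_mul (by positivity),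
      sqrt_sq zero_le_two]
  have hpow : (((2 * k : ℕ) : ℝ) / exp 1) ^ (2 * k) = 4 ^ k * ((k / exp 1) ^ k) ^ 2 := by
    rw [Nat.cast_mul, Nat.cast_two, mul_div_assoc, mul_pow, pow_mul, pow_mul']
    norm_num
  rw [stirlingSeq, stirlingSeq, hsqrt, hpow, hfact, sqrt_mul zero_le_two]
  field_simp
  rw [sq_sqrt zero_le_two]
  ring

lemma centralBinom_mul_sqrt_le (k : ℕ) : (k.centralBinom : ℝ) * √(π * k) ≤ 4 ^ k := by
  rcases Nat.eq_zero_or_pos k with rfl | hk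
  · simp
  have hsk : √π ≤ stirlingSeq k := sqrt_pi_le_stirlingSeq hk.ne'
  have hanti : stirlingSeq (2 * k) ≤ stirlingSeq k := by
    obtain ⟨j, rfl⟩ := Nat.exists_eq_add_of_lt hk
    simpa [Nat.mul_succ] using stirlingSeq'_antitone (show j ≤ 2 * j + 1 by omega)
  have hs : 0 < stirlingSeq k := (sqrt_pos.2 pi_pos).trans_le hsk
  have hratio : (k.centralBinom : ℝ) * √k / 4 ^ k ≤ (√π)⁻¹ := calc
    _ = stirlingSeq (2 * k) / stirlingSeq k ^ 2 :=
      (stirlingSeq_two_mul_div_sq k).symm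
    _ ≤ stirlingSeq k / stirlingSeq k ^ 2 := by gcongr
    _ = (stirlingSeq k)⁻¹ := by field_simp
    _ ≤ (√π)⁻¹ := inv_anti₀ (sqrt_pos.2 pi_pos) hsk
  calc (k.centralBinom : ℝ) * √(π * k) = k.centralBinom * √k / 4 ^ k * √π * 4 ^ k := by
        rw [sqrt_mul pi_pos.le]
        field_simp
    _ ≤ (√π)⁻¹ * √π * 4 ^ k := by gcongr
    _ = 4 ^ k := by field_simp

lemma choose_half_mul_sqrt_le (m : ℕ) : (m.choose (m / 2) : ℝ) * √(π * m / 2) ≤ 2 ^ m := by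
  obtain ⟨k, rfl | rfl⟩ := Nat.even_or_odd' m
  · have h := centralBinom_mul_sqrt_le k
    rw [Nat.centralBinom_eq_two_mul_choose] at h
    rw [show 2 * k / 2 = k by omega, pow_mul]
    convert h using 4 <;> push_cast <;> ring
  · have hchoose : 2 * (2 * k + 1).choose k = (k + 1).centralBinom := by
      have h := Nat.add_one_mul_choose_eq (2 * k + 1) k
      rw [Nat.centralBinom_eq_two_mul_choose, show 2 * (k + 1) = 2 * k + 1 + 1 by ring]
      nlinarith
    have h := centralBinom_mul_sqrt_le (k + 1)
    rw [← hchoose] at h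
    calc ((2 * k + 1).choose ((2 * k + 1) / 2) : ℝ) * √(π * (2 * k + 1 : ℕ) / 2)
        ≤ (2 * k + 1).choose k * √(π * (k + 1 : ℕ)) := by
          rw [show (2 * k + 1) / 2 = k by omega]
          gcongr
          push_cast
          nlinarith [pi_pos]
      _ ≤ 2 ^ (2 * k + 1) := by
          have h4 : (4 : ℝ) ^ (k + 1) = 2 * 2 ^ (2 * k + 1) := by
            rw [pow_succ, pow_succ, pow_mul]
            norm_num
            ring
          push_cast at h ⊢
          linarith

lemma logb_add_half_logb_logb_le {x : ℝ} {m : ℕ} (hx : 1 < x) (hm : 0 < m)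
    (hpow : x ≤ 2 ^ m) (h : x * √(π * m / 2) ≤ 2 ^ m) :
    logb 2 x + 1 / 2 * logb 2 (logb 2 x) + 1 / 2 * logb 2 (π / 2) ≤ m := by
  have hlog : logb 2 x ≤ m := by
    simpa [logb_pow] using logb_le_logb_of_le one_lt_two (by positivity) hpow
  have hloglog : logb 2 (logb 2 x) ≤ logb 2 m :=
    logb_le_logb_of_le one_lt_two (logb_pos one_lt_two hx) hlog
  have hsq : x ^ 2 * (π / 2 * m) ≤ (2 ^ m) ^ 2 := by
    have := pow_le_pow_left₀ (by positivity) h 2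
    rwa [mul_pow, sq_sqrt (by positivity), mul_div_right_comm] at this
  have hlogsq := logb_le_logb_of_le one_lt_two (by positivity) hsq
  rw [logb_mul (by positivity) (by positivity), logb_mul (by positivity) (by positivity),
    logb_pow, logb_pow, logb_pow, logb_self_eq_one one_lt_two] at hlogsq
  push_cast at hlogsq
  linarith

/-- For every `ε > 0` there is `n₀` such that for all `n ≥ n₀`,
`m(n, n-1) > log₂ n + (1/2) log₂ log₂ n + (1/2) log₂ (π/2) - ε`. -/
theorem stmt_5 (ε : ℝ) (hε : 0 < ε) : ∃ n₀ : ℕ, ∀ n : ℕ, n₀ ≤ n →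
    (mValue n (n - 1) : ℝ) >
      Real.logb 2 n + (1 / 2) * Real.logb 2 (Real.logb 2 n)
        + (1 / 2) * Real.logb 2 (Real.pi / 2) - ε := by
  refine ⟨3, fun n hn => ?_⟩
  set m := mValue n (n - 1)
  have hchoose : n ≤ m.choose (m / 2) := le_choose_mValue hn
  have hm : 0 < m := Nat.pos_of_ne_zero fun h => by simp [h] at hchoose; omega
  have hpow : (n : ℝ) ≤ 2 ^ m := by exact_mod_cast hchoose.trans (Nat.choose_le_two_pow _ _)
  have hsqrt : (n : ℝ) * √(π * m / 2) ≤ 2 ^ m :=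
    (mul_le_mul_of_nonneg_right (by exact_mod_cast hchoose) (sqrt_nonneg _)).trans
      (choose_half_mul_sqrt_le m)
  have := logb_add_half_logb_logb_le (by exact_mod_cast (by omega : 1 < n)) hm hpow hsqrt
  linarith
end

section
/- There exists a positive constant c such that for all integers n ≥ k ≥ 2, n(n−1)/(k(k−1)) ≤ m̄(n, k) ≤ c · n(n−1)/(k(k−1)). -/
/-- A set `T` of vertices of a hypergraph with edge set `E` is affinely closed iff
every edge sharing at least two vertices with `T` is fully contained in `T`. -/
def AffClosed {α : Type*} (E : Set (Set α)) (T : Set α) : Prop :=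
  ∀ e ∈ E, 2 ≤ (e ∩ T).ncard → e ⊆ T

/-- The affine closure of a set `S`: the intersection of all affinely closed
supersets of `S`. -/
def affCl {α : Type*} (E : Set (Set α)) (S : Set α) : Set α :=
  ⋂₀ {T | S ⊆ T ∧ AffClosed E T}

/-- The closure-lines of a hypergraph: the sets `aff {u, v}` for distinct `u, v`. -/
def closureLines {α : Type*} (E : Set (Set α)) : Set (Set α) :=
  {L | ∃ u v : α, u ≠ v ∧ L = affCl E {u, v}}

/-- `mbar n k` is the smallest number of distinct closure-lines in a hypergraph on
`n` vertices in which every closure-line consists of at most `k` vertices. -/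
noncomputable def mbar (n k : ℕ) : ℕ :=
  sInf { m | ∃ E : Set (Set (Fin n)),
    (∀ L ∈ closureLines E, L.ncard ≤ k) ∧ (closureLines E).ncard = m }

/-!
Lower bound: each of the `n (n - 1)` ordered pairs of distinct vertices lies on a closure-line,
and a closure-line with at most `k` vertices contains at most `k (k - 1)` of them.

Upper bound (for `k ≥ 9`; smaller `k` is handled by the hypergraph without edges, whose
closure-lines are the pairs): take `G = (ZMod 3) ^ r` with `|G| ≈ 3n / k`, a surjection
`f : Fin n → G` with fibres of size at most `k / 3`, and as edges all triples `{x, y, z}` with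
`f x + f y + f z = 0`. The closure of `{p, q}` is the preimage of the line
`{f p, f q, -(f p + f q)}` of the affine space `G`, which has at most `3 (k / 3) ≤ k` vertices,
and there are at most `|G|² = O(n² / k²)` such preimages.
-/

variable {α : Type*}

theorem mem_affCl_iff {E : Set (Set α)} {S : Set α} {x : α} :
    x ∈ affCl E S ↔ ∀ T, S ⊆ T → AffClosed E T → x ∈ T := by
  simp only [affCl, Set.mem_sInter, Set.mem_ofPred_eq, and_imp]

theorem subset_affCl (E : Set (Set α)) (S : Set α) : S ⊆ affCl E S :=
  fun _ hx => mem_affCl_iff.2 fun _ hST _ => hST hx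

theorem affCl_subset {E : Set (Set α)} {S T : Set α} (hST : S ⊆ T) (hT : AffClosed E T) :
    affCl E S ⊆ T :=
  Set.sInter_subset_of_mem ⟨hST, hT⟩

theorem affCl_empty (S : Set α) : affCl ∅ S = S :=
  (affCl_subset subset_rfl fun _ he => absurd he (Set.notMem_empty _)).antisymm
    (subset_affCl _ _)

theorem ncard_eq_two_of_mem_closureLines_empty {L : Set α} (hL : L ∈ closureLines ∅) :
    L.ncard = 2 := by
  obtain ⟨u, v, huv, rfl⟩ := hL
  rw [affCl_empty, Set.ncard_pair huv]

section Counting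

variable [Fintype α] (E : Set (Set α))

open scoped Classical in
theorem closureLines_eq_image :
    closureLines E = ↑((Finset.univ.offDiag).image fun p : α × α => affCl E {p.1, p.2}) := by
  ext L
  simp [closureLines, eq_comm]

open scoped Classical in
theorem ncard_closureLines_le :
    (closureLines E).ncard ≤ Fintype.card α * (Fintype.card α - 1) := by
  rw [closureLines_eq_image, Set.ncard_coe_finset, Nat.mul_sub_one]
  exact Finset.card_image_le.trans (Finset.offDiag_card _).le

theorem card_mul_pred_le_ncard_closureLines_mul {k : ℕ}
    (hE : ∀ L ∈ closureLines E, L.ncard ≤ k) :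
    Fintype.card α * (Fintype.card α - 1) ≤ (closureLines E).ncard * (k * (k - 1)) := by
  classical
  rw [closureLines_eq_image, Set.ncard_coe_finset, Nat.mul_sub_one, ← Finset.card_univ,
    ← Finset.offDiag_card (Finset.univ : Finset α), mul_comm]
  refine Finset.card_le_mul_card_image _ _ fun L hL => ?_
  have hLk : L.ncard ≤ k := hE L (by rw [closureLines_eq_image]; exact hL)
  have hfib : {p ∈ (Finset.univ : Finset α).offDiag | affCl E {p.1, p.2} = L} ⊆
      L.toFinset.offDiag := by
    intro p hp
    simp only [Finset.mem_filter, Finset.mem_offDiag, Finset.mem_univ, true_and] at hp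
    obtain ⟨hp, rfl⟩ := hp
    simp only [Finset.mem_offDiag, Set.mem_toFinset]
    exact ⟨subset_affCl _ _ (by simp), subset_affCl _ _ (by simp), hp⟩
  calc _ ≤ L.toFinset.offDiag.card := Finset.card_le_card hfib
    _ = L.ncard * (L.ncard - 1) := by
      rw [Finset.offDiag_card, Set.ncard_eq_toFinset_card', Nat.mul_sub_one]
    _ ≤ k * (k - 1) := Nat.mul_le_mul hLk (Nat.sub_le_sub_right hLk 1)

end Counting

section Mbar

variable {n k : ℕ}

theorem mbar_le (E : Set (Set (Fin n))) (hE : ∀ L ∈ closureLines E, L.ncard ≤ k) :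
    mbar n k ≤ (closureLines E).ncard :=
  Nat.sInf_le ⟨E, hE, rfl⟩

theorem exists_ncard_closureLines_eq_mbar (hk : 2 ≤ k) :
    ∃ E : Set (Set (Fin n)), (∀ L ∈ closureLines E, L.ncard ≤ k) ∧
      (closureLines E).ncard = mbar n k := by
  have hne : ∃ m, ∃ E : Set (Set (Fin n)), (∀ L ∈ closureLines E, L.ncard ≤ k) ∧
      (closureLines E).ncard = m :=
    ⟨_, ∅, fun _ hL => (ncard_eq_two_of_mem_closureLines_empty hL).trans_le hk, rfl⟩
  exact Nat.sInf_mem hne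

theorem mbar_le_mul_pred (hk : 2 ≤ k) : mbar n k ≤ n * (n - 1) :=
  (mbar_le ∅ fun _ hL => (ncard_eq_two_of_mem_closureLines_empty hL).trans_le hk).trans
    (by simpa using ncard_closureLines_le (∅ : Set (Set (Fin n))))

theorem mul_pred_le_mbar_mul (hk : 2 ≤ k) : n * (n - 1) ≤ mbar n k * (k * (k - 1)) := by
  obtain ⟨E, hE, hEm⟩ := exists_ncard_closureLines_eq_mbar (n := n) hk
  simpa [hEm] using card_mul_pred_le_ncard_closureLines_mul E hE

end Mbar

theorem mem_and_mem_of_two_le_ncard_inter {x y z : α} {T : Set α}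
    (h : 2 ≤ (({x, y, z} : Set α) ∩ T).ncard) :
    x ∈ T ∧ y ∈ T ∨ x ∈ T ∧ z ∈ T ∨ y ∈ T ∧ z ∈ T := by
  by_contra hT
  have : (({x, y, z} : Set α) ∩ T).ncard ≤ 1 := by
    refine (Set.ncard_le_one).2 ?_
    rintro a ⟨ha, haT⟩ b ⟨hb, hbT⟩
    simp only [Set.mem_insert_iff, Set.mem_singleton_iff] at ha hb
    rcases ha with rfl | rfl | rfl <;> rcases hb with rfl | rfl | rfl <;> tauto
  omega

section ZeroSumTriples

variable {G : Type*} [AddCommGroup G] (f : α → G)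

def zeroSumTriples : Set (Set α) :=
  {e | ∃ x y z, f x + f y + f z = 0 ∧ e = {x, y, z}}

theorem affClosed_zeroSumTriples_preimage {S : Set G}
    (hS : ∀ a ∈ S, ∀ b ∈ S, -(a + b) ∈ S) :
    AffClosed (zeroSumTriples f) (f ⁻¹' S) := by
  rintro _ ⟨x, y, z, hxyz, rfl⟩ h2
  have third : ∀ {a b c : G}, a + b + c = 0 → a ∈ S → b ∈ S → c ∈ S := fun h ha hb =>
    eq_neg_of_add_eq_zero_right h ▸ hS _ ha _ hb
  have hxzy : f x + f z + f y = 0 := by rw [← hxyz]; abel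
  have hyzx : f y + f z + f x = 0 := by rw [← hxyz]; abel
  simp only [Set.insert_subset_iff, Set.singleton_subset_iff, Set.mem_preimage]
  rcases mem_and_mem_of_two_le_ncard_inter h2 with ⟨hx, hy⟩ | ⟨hx, hz⟩ | ⟨hy, hz⟩
  · exact ⟨hx, hy, third hxyz hx hy⟩
  · exact ⟨hx, third hxzy hx hz, hz⟩
  · exact ⟨third hyzx hy hz, hy, hz⟩

variable {f}

theorem mem_of_affClosed_zeroSumTriples {T : Set α} (hT : AffClosed (zeroSumTriples f) T)
    {x y z : α} (hxy : x ≠ y) (hx : x ∈ T) (hy : y ∈ T) (hxyz : f x + f y + f z = 0) :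
    z ∈ T := by
  refine hT _ ⟨x, y, z, hxyz, rfl⟩ ?_ (by simp)
  calc 2 = ({x, y} : Set α).ncard := (Set.ncard_pair hxy).symm
    _ ≤ _ := Set.ncard_le_ncard (by simp [Set.insert_subset_iff, hx, hy]) (Set.toFinite _)

variable [Module (ZMod 3) G]

theorem add_add_self_eq_zero (a : G) : a + a + a = 0 := by
  have h : (3 : ZMod 3) • a = 0 := by rw [show (3 : ZMod 3) = 0 from rfl, zero_smul]
  rwa [ofNat_smul_eq_nsmul (R := ZMod 3), succ_nsmul, two_nsmul] at h

theorem eq_of_neg_add_eq_left {a b : G} (h : -(a + b) = a) : a = b := by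
  linear_combination (norm := module) add_add_self_eq_zero a - neg_eq_iff_add_eq_zero.1 h

theorem eq_of_neg_add_eq_right {a b : G} (h : -(a + b) = b) : a = b := by
  linear_combination (norm := module) neg_eq_iff_add_eq_zero.1 h - add_add_self_eq_zero b

theorem neg_add_mem_triple (a b : G) :
    ∀ x ∈ ({a, b, -(a + b)} : Set G), ∀ y ∈ ({a, b, -(a + b)} : Set G),
      -(x + y) ∈ ({a, b, -(a + b)} : Set G) := by
  intro x hx y hy
  simp only [Set.mem_insert_iff, Set.mem_singleton_iff] at hx hy ⊢
  have := add_add_self_eq_zero a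
  have := add_add_self_eq_zero b
  have := add_add_self_eq_zero (-(a + b))
  rcases hx with rfl | rfl | rfl <;> rcases hy with rfl | rfl | rfl <;> grind

theorem affCl_zeroSumTriples_pair (hf : Function.Surjective f) {p q : α}
    (hpq : p ≠ q) : affCl (zeroSumTriples f) {p, q} = f ⁻¹' {f p, f q, -(f p + f q)} := by
  refine (affCl_subset (by simp [Set.insert_subset_iff])
    (affClosed_zeroSumTriples_preimage f (neg_add_mem_triple _ _))).antisymm fun w hw => ?_
  refine mem_affCl_iff.2 fun T hpqT hT => ?_
  have hp : p ∈ T := hpqT (by simp)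
  have hq : q ∈ T := hpqT (by simp)
  have hsum : f p + f q + -(f p + f q) = 0 := add_neg_cancel _
  have hc : ∀ {z}, f z = -(f p + f q) → z ∈ T := fun hz =>
    mem_of_affClosed_zeroSumTriples hT hpq hp hq (by rw [hz]; exact hsum)
  simp only [Set.mem_preimage, Set.mem_insert_iff, Set.mem_singleton_iff] at hw
  rcases hw with hw | hw | hw
  · rcases eq_or_ne (f p) (f q) with hab | hab
    · exact mem_of_affClosed_zeroSumTriples hT hpq hp hq
        (by rw [hw, ← hab]; exact add_add_self_eq_zero _)
    · obtain ⟨z, hz⟩ := hf (-(f p + f q))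
      have hqz : q ≠ z := by
        rintro rfl
        exact hab (eq_of_neg_add_eq_right hz.symm)
      exact mem_of_affClosed_zeroSumTriples hT hqz hq (hc hz) (by rw [hz, hw]; abel)
  · rcases eq_or_ne (f p) (f q) with hab | hab
    · exact mem_of_affClosed_zeroSumTriples hT hpq hp hq
        (by rw [hw, hab]; exact add_add_self_eq_zero _)
    · obtain ⟨z, hz⟩ := hf (-(f p + f q))
      have hpz : p ≠ z := by
        rintro rfl
        exact hab (eq_of_neg_add_eq_left hz.symm)
      exact mem_of_affClosed_zeroSumTriples hT hpz hp (hc hz) (by rw [hz, hw]; abel)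
  · exact hc hw

theorem closureLines_zeroSumTriples_subset (hf : Function.Surjective f) :
    closureLines (zeroSumTriples f) ⊆
      Set.range fun ab : G × G => f ⁻¹' {ab.1, ab.2, -(ab.1 + ab.2)} := by
  rintro _ ⟨p, q, hpq, rfl⟩
  exact ⟨(f p, f q), (affCl_zeroSumTriples_pair hf hpq).symm⟩

theorem ncard_closureLines_zeroSumTriples_le [Finite G] (hf : Function.Surjective f) :
    (closureLines (zeroSumTriples f)).ncard ≤ Nat.card G ^ 2 := by
  refine (Set.ncard_le_ncard (closureLines_zeroSumTriples_subset hf)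
    (Set.toFinite _)).trans ?_
  rw [← Set.image_univ, sq, ← Nat.card_prod, ← Set.ncard_univ]
  exact Set.ncard_image_le

theorem ncard_le_of_mem_closureLines_zeroSumTriples (hf : Function.Surjective f) {B : ℕ}
    (hB : ∀ a, (f ⁻¹' {a}).ncard ≤ B) {L : Set α}
    (hL : L ∈ closureLines (zeroSumTriples f)) : L.ncard ≤ 3 * B := by
  obtain ⟨⟨a, b⟩, rfl⟩ := closureLines_zeroSumTriples_subset hf hL
  have hsplit :
      f ⁻¹' {a, b, -(a + b)} = f ⁻¹' {a} ∪ f ⁻¹' {b} ∪ f ⁻¹' {-(a + b)} := by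
    ext; simp [or_assoc]
  dsimp only
  rw [hsplit]
  calc _ ≤ (f ⁻¹' {a} ∪ f ⁻¹' {b}).ncard + (f ⁻¹' {-(a + b)}).ncard :=
        Set.ncard_union_le _ _
    _ ≤ (f ⁻¹' {a}).ncard + (f ⁻¹' {b}).ncard + (f ⁻¹' {-(a + b)}).ncard := by
      gcongr; exact Set.ncard_union_le _ _
    _ ≤ 3 * B := by linarith [hB a, hB b, hB (-(a + b))]

end ZeroSumTriples

theorem exists_surjective_ncard_fiber_le {β : Type*} [Fintype α] [Fintype β] [Nonempty β]
    {B : ℕ} (h₁ : Fintype.card β ≤ Fintype.card α)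
    (h₂ : Fintype.card α ≤ B * Fintype.card β) :
    ∃ f : α → β, Function.Surjective f ∧ ∀ b, (f ⁻¹' {b}).ncard ≤ B := by
  set t := Fintype.card β
  have ht : 0 < t := Fintype.card_pos
  let eα := Fintype.equivFin α
  let eβ := Fintype.equivFin β
  refine ⟨fun x => eβ.symm ⟨eα x % t, Nat.mod_lt _ ht⟩, fun b => ?_, fun b => ?_⟩
  · refine ⟨eα.symm ⟨eβ b, (eβ b).2.trans_le h₁⟩, ?_⟩
    rw [Equiv.symm_apply_eq]
    exact Fin.ext (by simpa using Nat.mod_eq_of_lt (eβ b).2)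
  · let q : α → Fin B := fun x =>
      ⟨eα x / t, Nat.div_lt_of_lt_mul ((eα x).2.trans_le (h₂.trans_eq (mul_comm _ _)))⟩
    have hq : Set.InjOn q ((fun x => eβ.symm ⟨eα x % t, Nat.mod_lt _ ht⟩) ⁻¹' {b}) := by
      intro x hx y hy hxy
      simp only [Set.mem_preimage, Set.mem_singleton_iff] at hx hy
      have hmod : (eα x : ℕ) % t = eα y % t :=
        congrArg Fin.val (eβ.symm.injective (hx.trans hy.symm))
      have hdiv : (eα x : ℕ) / t = eα y / t := congrArg Fin.val hxy
      exact eα.injective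
        (Fin.ext (by rw [← Nat.div_add_mod (eα x) t, hmod, hdiv, Nat.div_add_mod]))
    simpa using Set.ncard_le_ncard_of_injOn q (fun _ _ => Set.mem_univ _) hq

theorem mbar_le_card_sq (G : Type*) [AddCommGroup G] [Module (ZMod 3) G] [Fintype G] {n k : ℕ}
    (hGn : Fintype.card G ≤ n) (hnk : n ≤ k / 3 * Fintype.card G) :
    mbar n k ≤ Fintype.card G ^ 2 := by
  obtain ⟨f, hf, hfib⟩ :=
    exists_surjective_ncard_fiber_le (α := Fin n) (by simpa using hGn) (by simpa using hnk)
  calc mbar n k ≤ (closureLines (zeroSumTriples f)).ncard :=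
        mbar_le _ fun _ hL =>
          (ncard_le_of_mem_closureLines_zeroSumTriples hf hfib hL).trans (Nat.mul_div_le k 3)
    _ ≤ Fintype.card G ^ 2 := by
      simpa using ncard_closureLines_zeroSumTriples_le hf

/-- With `B = k / 3` and `3 ^ r ≤ n / B < 3 ^ (r + 1)`, the group `(ZMod 3) ^ (r + 1)` has
`t ≤ 3n / B` elements and `k ≤ 5B`, so `t k ≤ 15 n`; with `n² ≤ 2 n (n - 1)` this gives
`450 = 2 · 15²`. -/
theorem mbar_mul_le_of_nine_le {n k : ℕ} (hk : 9 ≤ k) (hkn : k ≤ n) :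
    mbar n k * (k * (k - 1)) ≤ 450 * (n * (n - 1)) := by
  set B := k / 3
  set m := n / B
  set t := 3 ^ (Nat.log 3 m + 1)
  have hB : 3 ≤ B := by omega
  have hkB : k ≤ 5 * B := by omega
  have hm : m ≠ 0 := (Nat.div_pos (by omega) (by omega)).ne'
  have htm : t ≤ 3 * m := by
    rw [show t = 3 * 3 ^ Nat.log 3 m from pow_succ' _ _]
    exact Nat.mul_le_mul_left 3 (Nat.pow_log_le_self 3 hm)
  have hmt : m < t := Nat.lt_pow_succ_log_self (by norm_num) m
  have hmB : m * B ≤ n := Nat.div_mul_le_self n B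
  have hcard : Fintype.card (Fin (Nat.log 3 m + 1) → ZMod 3) = t := by simp [t]
  have htn : t ≤ n :=
    htm.trans ((Nat.mul_le_mul_right m hB).trans (by rw [mul_comm]; exact hmB))
  have hnt : n ≤ B * t := by
    rw [mul_comm]; exact ((Nat.div_lt_iff_lt_mul (by omega)).1 hmt).le
  have hmbar : mbar n k ≤ t ^ 2 := hcard ▸ mbar_le_card_sq _ (hcard ▸ htn) (hcard ▸ hnt)
  have htk : t * k ≤ 15 * n := calc
    t * k ≤ (3 * m) * (5 * B) := Nat.mul_le_mul htm hkB
    _ = 15 * (m * B) := by ring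
    _ ≤ 15 * n := Nat.mul_le_mul_left 15 hmB
  have hn : n * n ≤ 2 * (n * (n - 1)) := by
    have : 2 * n ≤ n * n := Nat.mul_le_mul_right n (by omega)
    rw [Nat.mul_sub_one]; omega
  calc mbar n k * (k * (k - 1)) ≤ t ^ 2 * (k * k) :=
        Nat.mul_le_mul hmbar (Nat.mul_le_mul_left k (Nat.sub_le k 1))
    _ = (t * k) * (t * k) := by ring
    _ ≤ (15 * n) * (15 * n) := Nat.mul_le_mul htk htk
    _ = 225 * (n * n) := by ring
    _ ≤ 450 * (n * (n - 1)) := by omega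

theorem mbar_mul_le {n k : ℕ} (hk : 2 ≤ k) (hkn : k ≤ n) :
    mbar n k * (k * (k - 1)) ≤ 450 * (n * (n - 1)) := by
  by_cases h9 : 9 ≤ k
  · exact mbar_mul_le_of_nine_le h9 hkn
  · calc mbar n k * (k * (k - 1)) ≤ n * (n - 1) * (8 * 7) :=
          Nat.mul_le_mul (mbar_le_mul_pred hk) (Nat.mul_le_mul (by omega) (by omega))
      _ ≤ 450 * (n * (n - 1)) := by omega

/-- There is a positive constant `c` such that
`n(n-1)/(k(k-1)) ≤ m̄(n, k) ≤ c · n(n-1)/(k(k-1))` whenever `n ≥ k ≥ 2`. -/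
theorem stmt_14 : ∃ c : ℝ, 0 < c ∧ ∀ n k : ℕ, 2 ≤ k → k ≤ n →
    ((n : ℝ) * ((n : ℝ) - 1)) / ((k : ℝ) * ((k : ℝ) - 1)) ≤ (mbar n k : ℝ) ∧
    (mbar n k : ℝ) ≤ c * (((n : ℝ) * ((n : ℝ) - 1)) / ((k : ℝ) * ((k : ℝ) - 1))) := by
  refine ⟨450, by norm_num, fun n k hk hkn => ?_⟩
  have hlow := mul_pred_le_mbar_mul (n := n) hk
  have hup := mbar_mul_le hk hkn
  have hk1 : (2 : ℝ) ≤ k := by exact_mod_cast hk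
  have hpos : (0 : ℝ) < k * (k - 1) := by nlinarith
  rify [show 1 ≤ n by omega, show 1 ≤ k by omega] at hlow hup
  constructor
  · rw [div_le_iff₀ hpos]; exact hlow
  · rw [← mul_div_assoc, le_div_iff₀ hpos]; exact hup
end
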